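/- Fix a subgroup M ≤ Z/p^k. Define a binary relation ≤(M) on the set of nondegenerate tuples in (Z/p^k)^n by: (β, β') ∈ ≤(M) iff β' is L-dependent on β for some subgroup L ≤ M. Then ≤(M) is an equivalence relation (reflexive, symmetric and transitive) on the set of nondegenerate tuples. -/
import Mathlib

section Aux

variable {N n : ℕ}

lemma range_eq_span (m : Fin n → ZMod N) :
    Set.range (fun x : Fin n → ZMod N => ∑ i, m i * x i)
      = (Ideal.span (Set.range m) : Set (ZMod N)) := by
  ext y
  constructor
  · rintro ⟨x, rfl⟩
    exact Ideal.sum_mem _ fun i _ => Ideal.mul_mem_right _ _ (Ideal.subset_span ⟨i, rfl⟩)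
  · intro hy
    induction hy using Submodule.span_induction with
    | mem z hz =>
        obtain ⟨i, rfl⟩ := hz
        exact ⟨Pi.single i 1, by simp [Pi.single_apply]⟩
    | zero => exact ⟨0, by simp⟩
    | add a b _ _ ha hb =>
        obtain ⟨x, rfl⟩ := ha; obtain ⟨x', rfl⟩ := hb
        exact ⟨x + x', by simp [mul_add, Finset.sum_add_distrib]⟩
    | smul r a _ ha =>
        obtain ⟨x, rfl⟩ := ha
        exact ⟨r • x, by simp [Finset.mul_sum, smul_eq_mul, mul_left_comm]⟩

/-- the "dependence vector" of `β'` on `β` at index `j`. -/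
def mv (β β' : Fin n → ZMod N) (j : Fin n) : Fin n → ZMod N :=
  fun i => β' i - (β j)⁻¹ * β' j * β i

lemma swap_incl (β β' : Fin n → ZMod N) (j j' : Fin n) (hj' : IsUnit (β' j')) :
    Ideal.span (Set.range (mv β' β j')) ≤ Ideal.span (Set.range (mv β β' j)) := by
  have hu : (β' j')⁻¹ * β' j' = 1 := ZMod.inv_mul_of_unit _ hj'
  rw [Ideal.span_le]
  rintro y ⟨i, rfl⟩
  set I := Ideal.span (Set.range (mv β β' j)) with hI
  have h1 : mv β β' j i ∈ I := Ideal.subset_span ⟨i, rfl⟩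
  have h2 : mv β β' j j' ∈ I := Ideal.subset_span ⟨j', rfl⟩
  have key : mv β' β j' i =
      (-((β' j')⁻¹ * β j')) * (mv β β' j i) + ((β' j')⁻¹ * (mv β β' j j')) * β i := by
    simp only [mv]
    linear_combination (-(β i)) * hu
  rw [SetLike.mem_coe, key]
  exact I.add_mem (I.mul_mem_left _ h1) (I.mul_mem_right _ (I.mul_mem_left _ h2))

end Aux

/-- `β'` is `L`-dependent on `β`: for any index `j` with `β j` a unit, `L` is the
image of `x ↦ ⟨β' - (β j)⁻¹ β' j • β, x⟩`. -/
def MDep {p k n : ℕ} (L : AddSubgroup (ZMod (p ^ k))) (β β' : Fin n → ZMod (p ^ k)) : Prop :=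
  ∀ j : Fin n, IsUnit (β j) →
    Set.range (fun x : Fin n → ZMod (p ^ k) =>
      ∑ i, (β' i - (β j)⁻¹ * β' j * β i) * x i) = (L : Set (ZMod (p ^ k)))

/-- Nondegeneracy: some coordinate is a unit. -/
def Nondeg {p k n : ℕ} (β : Fin n → ZMod (p ^ k)) : Prop := ∃ j, IsUnit (β j)

/-- The relation `≤(M)`: `β'` is `L`-dependent on `β` for some subgroup `L ≤ M`. -/
def LeM {p k n : ℕ} (M : AddSubgroup (ZMod (p ^ k))) (β β' : Fin n → ZMod (p ^ k)) : Prop :=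
  ∃ L : AddSubgroup (ZMod (p ^ k)), L ≤ M ∧ MDep L β β'

section Main

variable {p k n : ℕ}

lemma mdep_iff (L : AddSubgroup (ZMod (p ^ k))) (β β' : Fin n → ZMod (p ^ k)) :
    MDep L β β' ↔ ∀ j : Fin n, IsUnit (β j) →
      (Ideal.span (Set.range (mv β β' j)) : Set (ZMod (p ^ k))) = (L : Set (ZMod (p ^ k))) := by
  unfold MDep
  constructor <;> intro h j hj <;> have := h j hj <;>
    rw [← this] <;> [skip; skip] <;>
    · exact (range_eq_span (mv β β' j)).symm ▸ rfl

end Main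

theorem stmt_7 (p k n : ℕ) (hp : p.Prime) (hk : 1 ≤ k) (hn : 1 ≤ n)
    (M : AddSubgroup (ZMod (p ^ k))) :
    (∀ β : Fin n → ZMod (p ^ k), Nondeg β → LeM M β β) ∧
    (∀ β β' : Fin n → ZMod (p ^ k), Nondeg β → Nondeg β' →
      LeM M β β' → LeM M β' β) ∧
    (∀ β β' β'' : Fin n → ZMod (p ^ k), Nondeg β → Nondeg β' → Nondeg β'' →
      LeM M β β' → LeM M β' β'' → LeM M β β'') := by
  refine ⟨?_, ?_, ?_⟩
  · -- reflexivity
    rintro β ⟨j₀, hj₀⟩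
    refine ⟨⊥, bot_le, fun j hj => ?_⟩
    have hu : (β j)⁻¹ * β j = 1 := ZMod.inv_mul_of_unit _ hj
    have hz : (fun x : Fin n → ZMod (p ^ k) =>
        ∑ i, (β i - (β j)⁻¹ * β j * β i) * x i) = fun _ => 0 := by
      funext x; simp [hu]
    rw [hz]
    simp
  · -- symmetry
    rintro β β' ⟨j, hj⟩ _ ⟨L, hLM, hdep⟩
    refine ⟨L, hLM, ?_⟩
    rw [mdep_iff] at hdep ⊢
    intro j' hj'
    have h1 : Ideal.span (Set.range (mv β' β j')) = Ideal.span (Set.range (mv β β' j)) :=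
      le_antisymm (swap_incl β β' j j' hj') (swap_incl β' β j' j hj)
    rw [h1]
    exact hdep j hj
  · -- transitivity
    rintro β β' β'' ⟨j, hj⟩ ⟨j', hj'⟩ ⟨j'', hj''⟩ ⟨L₁, hL₁M, hdep₁⟩ ⟨L₂, hL₂M, hdep₂⟩
    rw [mdep_iff] at hdep₁ hdep₂
    have hE₁ := hdep₁ j hj
    have hE₂ := hdep₂ j' hj'
    set I₁ := Ideal.span (Set.range (mv β β' j)) with hI₁
    set I₂ := Ideal.span (Set.range (mv β' β'' j')) with hI₂
    set I₃ := Ideal.span (Set.range (mv β β'' j)) with hI₃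
    have hu : (β j)⁻¹ * β j = 1 := ZMod.inv_mul_of_unit _ hj
    -- I₃ ≤ I₁ ⊔ I₂
    have hsub : I₃ ≤ I₁ ⊔ I₂ := by
      rw [hI₃, Ideal.span_le]
      rintro y ⟨i, rfl⟩
      have h1i : mv β β' j i ∈ I₁ ⊔ I₂ :=
        le_sup_left (α := Ideal (ZMod (p ^ k))) (Ideal.subset_span ⟨i, rfl⟩)
      have h1j : mv β β' j j ∈ I₁ ⊔ I₂ :=
        le_sup_left (α := Ideal (ZMod (p ^ k))) (Ideal.subset_span ⟨j, rfl⟩)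
      have h2i : mv β' β'' j' i ∈ I₁ ⊔ I₂ :=
        le_sup_right (α := Ideal (ZMod (p ^ k))) (Ideal.subset_span ⟨i, rfl⟩)
      have h2j : mv β' β'' j' j ∈ I₁ ⊔ I₂ :=
        le_sup_right (α := Ideal (ZMod (p ^ k))) (Ideal.subset_span ⟨j, rfl⟩)
      set d : ZMod (p ^ k) := (β' j')⁻¹ * β'' j' with hd
      have key : mv β β'' j i =
          mv β' β'' j' i + d * (mv β β' j i)
            - ((β j)⁻¹ * (mv β' β'' j' j + d * (mv β β' j j))) * β i := by
        simp only [mv]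
        linear_combination (-((β j)⁻¹ * d * β' j * β i)) * hu
      rw [SetLike.mem_coe, key]
      refine sub_mem (add_mem h2i (Ideal.mul_mem_left _ _ h1i))
        (Ideal.mul_mem_right _ _ (Ideal.mul_mem_left _ _ (add_mem h2j (Ideal.mul_mem_left _ _ h1j))))
    refine ⟨I₃.toAddSubgroup, ?_, ?_⟩
    · -- I₃ ≤ M
      intro x hx
      have hx' : x ∈ I₁ ⊔ I₂ := hsub hx
      rw [Submodule.mem_sup] at hx'
      obtain ⟨a, ha, b, hb, rfl⟩ := hx'
      have haL : a ∈ L₁ := by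
        have : a ∈ (I₁ : Set (ZMod (p ^ k))) := ha
        rwa [hE₁] at this
      have hbL : b ∈ L₂ := by
        have : b ∈ (I₂ : Set (ZMod (p ^ k))) := hb
        rwa [hE₂] at this
      exact M.add_mem (hL₁M haL) (hL₂M hbL)
    · -- MDep
      rw [mdep_iff]
      intro jj hjj
      have : Ideal.span (Set.range (mv β β'' jj)) = I₃ :=
        le_antisymm
          (le_trans (swap_incl β'' β j'' jj hjj) (swap_incl β β'' j j'' hj''))
          (le_trans (swap_incl β'' β j'' j hj) (swap_incl β β'' jj j'' hj''))
      rw [this]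
      rfl
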